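/- (Proposition 1.) A VN-EGNN layer is E(3)-equivariant: let (X', H', Z', V') = VN-EGNN(X, H, Z, V) denote the output of one VN-EGNN layer consisting of the three sequential message passing phases (Phase I between physical nodes, Phase II from physical nodes to virtual nodes, Phase III from virtual nodes to physical nodes), with arbitrary message, coordinate-scale, and feature-update functions, under the non-degeneracy assumptions that all pairwise distances appearing in the update formulas are nonzero. Then for every orthogonal matrix R ∈ ℝ^{3×3} and every t ∈ ℝ³, VN-EGNN(R X + t, H, R Z + t, V) = (R X' + t, H', R Z' + t, V'), where R X + t denotes applying x ↦ R x + t to every column of the coordinate matrix. That is, the output coordinates of physical and virtual nodes transform equivariantly under joint roto-translations and reflections of the input coordinates, while the output features are invariant. -/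

import Mathlib

open Matrix

/-- The action of a roto-translation (possibly with reflection): `x ↦ R x + t`. -/
noncomputable def rotoTrans (R : Matrix (Fin 3) (Fin 3) ℝ) (t : EuclideanSpace ℝ (Fin 3))
    (x : EuclideanSpace ℝ (Fin 3)) : EuclideanSpace ℝ (Fin 3) :=
  (show EuclideanSpace ℝ (Fin 3) from WithLp.toLp 2 (R.mulVec x)) + t

/-- All data defining a VN-EGNN layer: the neighborhood structure `Nbr` of the graph on
the physical nodes, the coordinate-independent edge features `a` (physical–physical) and
`d` (physical–virtual), and the message, coordinate-scale and feature-update functions of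
the three message passing phases. -/
structure VNEGNNLayer (N K D E : ℕ) where
  Nbr : Fin N → Finset (Fin N)
  a : Fin N → Fin N → ℝ
  d : Fin N → Fin K → ℝ
  φeaa : (Fin D → ℝ) → (Fin D → ℝ) → ℝ → ℝ → (Fin E → ℝ)
  φxaa : (Fin E → ℝ) → ℝ
  φhaa : (Fin D → ℝ) → (Fin E → ℝ) → (Fin D → ℝ)
  φeav : (Fin D → ℝ) → (Fin D → ℝ) → ℝ → ℝ → (Fin E → ℝ)
  φxav : (Fin E → ℝ) → ℝ
  φhav : (Fin D → ℝ) → (Fin E → ℝ) → (Fin D → ℝ)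
  φeva : (Fin D → ℝ) → (Fin D → ℝ) → ℝ → ℝ → (Fin E → ℝ)
  φxva : (Fin E → ℝ) → ℝ
  φhva : (Fin D → ℝ) → (Fin E → ℝ) → (Fin D → ℝ)

namespace VNEGNNLayer

variable {N K D E : ℕ} (P : VNEGNNLayer N K D E)

/-- Phase I intermediate physical node coordinates `x_i^{1/2}`. -/
noncomputable def xHalf (X : Fin N → EuclideanSpace ℝ (Fin 3)) (H : Fin N → Fin D → ℝ) :
    Fin N → EuclideanSpace ℝ (Fin 3) := fun i =>
  X i + ((P.Nbr i).card : ℝ)⁻¹ •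
    ∑ j ∈ P.Nbr i, ‖X i - X j‖⁻¹ •
      (P.φxaa (P.φeaa (H i) (H j) (‖X i - X j‖ ^ 2) (P.a i j)) • (X i - X j))

/-- Phase I intermediate physical node features `h_i^{1/2}`. -/
noncomputable def hHalf (X : Fin N → EuclideanSpace ℝ (Fin 3)) (H : Fin N → Fin D → ℝ) :
    Fin N → Fin D → ℝ := fun i =>
  H i + P.φhaa (H i) (((P.Nbr i).card : ℝ)⁻¹ •
    ∑ j ∈ P.Nbr i, P.φeaa (H i) (H j) (‖X i - X j‖ ^ 2) (P.a i j))

/-- Phase II updated virtual node coordinates `z_j'`. -/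
noncomputable def zOut (X : Fin N → EuclideanSpace ℝ (Fin 3)) (H : Fin N → Fin D → ℝ)
    (Z : Fin K → EuclideanSpace ℝ (Fin 3)) (V : Fin K → Fin D → ℝ) :
    Fin K → EuclideanSpace ℝ (Fin 3) := fun j =>
  Z j + (N : ℝ)⁻¹ •
    ∑ i, ‖P.xHalf X H i - Z j‖⁻¹ •
      (P.φxav (P.φeav (P.hHalf X H i) (V j) (‖P.xHalf X H i - Z j‖ ^ 2) (P.d i j)) •
        (P.xHalf X H i - Z j))

/-- Phase II updated virtual node features `v_j'`. -/
noncomputable def vOut (X : Fin N → EuclideanSpace ℝ (Fin 3)) (H : Fin N → Fin D → ℝ)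
    (Z : Fin K → EuclideanSpace ℝ (Fin 3)) (V : Fin K → Fin D → ℝ) :
    Fin K → Fin D → ℝ := fun j =>
  V j + P.φhav (V j) ((N : ℝ)⁻¹ •
    ∑ i, P.φeav (P.hHalf X H i) (V j) (‖P.xHalf X H i - Z j‖ ^ 2) (P.d i j))

/-- Phase III updated physical node coordinates `x_j'`. -/
noncomputable def xOut (X : Fin N → EuclideanSpace ℝ (Fin 3)) (H : Fin N → Fin D → ℝ)
    (Z : Fin K → EuclideanSpace ℝ (Fin 3)) (V : Fin K → Fin D → ℝ) :
    Fin N → EuclideanSpace ℝ (Fin 3) := fun j =>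
  P.xHalf X H j + (K : ℝ)⁻¹ •
    ∑ i, ‖P.zOut X H Z V i - P.xHalf X H j‖⁻¹ •
      (P.φxva (P.φeva (P.vOut X H Z V i) (P.hHalf X H j)
          (‖P.zOut X H Z V i - P.xHalf X H j‖ ^ 2) (P.d j i)) •
        (P.zOut X H Z V i - P.xHalf X H j))

/-- Phase III updated physical node features `h_j'`. -/
noncomputable def hOut (X : Fin N → EuclideanSpace ℝ (Fin 3)) (H : Fin N → Fin D → ℝ)
    (Z : Fin K → EuclideanSpace ℝ (Fin 3)) (V : Fin K → Fin D → ℝ) :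
    Fin N → Fin D → ℝ := fun j =>
  P.hHalf X H j + P.φhva (P.hHalf X H j) ((K : ℝ)⁻¹ •
    ∑ i, P.φeva (P.vOut X H Z V i) (P.hHalf X H j)
      (‖P.zOut X H Z V i - P.xHalf X H j‖ ^ 2) (P.d j i))

/-- One full VN-EGNN layer `(X, H, Z, V) ↦ (X', H', Z', V')`. -/
noncomputable def layer (X : Fin N → EuclideanSpace ℝ (Fin 3)) (H : Fin N → Fin D → ℝ)
    (Z : Fin K → EuclideanSpace ℝ (Fin 3)) (V : Fin K → Fin D → ℝ) :
    (Fin N → EuclideanSpace ℝ (Fin 3)) × (Fin N → Fin D → ℝ) ×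
      (Fin K → EuclideanSpace ℝ (Fin 3)) × (Fin K → Fin D → ℝ) :=
  (P.xOut X H Z V, P.hOut X H Z V, P.zOut X H Z V, P.vOut X H Z V)

end VNEGNNLayer

/-! An affine isometry `g` preserves every distance, so all arguments of the message functions
are invariant and so are the features. Each coordinate update adds to a point a linear
combination of difference vectors with invariant coefficients; `g` maps such a sum to the
same combination of the transformed differences, so the new coordinates are equivariant.
Running through the three phases in order gives the claim for every `x ↦ R x + t`, which is an
affine isometry when `R` is orthogonal. -/

theorem Matrix.inner_toLpLin_toLpLin {m n : Type*} [Fintype m] [Fintype n] [DecidableEq n]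
    {R : Matrix m n ℝ} (hR : Rᵀ * R = 1) (x y : EuclideanSpace ℝ n) :
    inner ℝ (toLpLin 2 2 R x) (toLpLin 2 2 R y) = inner ℝ x y := by
  simp only [EuclideanSpace.inner_eq_star_dotProduct, star_trivial, toLpLin_apply,
    dotProduct_mulVec, ← mulVec_transpose, mulVec_mulVec, hR, one_mulVec]

noncomputable def Matrix.toEuclideanLinearIsometry {m n : Type*} [Fintype m] [Fintype n]
    [DecidableEq n] {R : Matrix m n ℝ} (hR : Rᵀ * R = 1) :
    EuclideanSpace ℝ n →ₗᵢ[ℝ] EuclideanSpace ℝ m :=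
  (toLpLin 2 2 R).isometryOfInner (inner_toLpLin_toLpLin hR)

noncomputable def rotoTransAffineIsometry {R : Matrix (Fin 3) (Fin 3) ℝ} (hR : Rᵀ * R = 1)
    (t : EuclideanSpace ℝ (Fin 3)) : EuclideanSpace ℝ (Fin 3) →ᵃⁱ[ℝ] EuclideanSpace ℝ (Fin 3) :=
  (AffineIsometryEquiv.constVAdd ℝ _ t).toAffineIsometry.comp
    (toEuclideanLinearIsometry hR).toAffineIsometry

theorem coe_rotoTransAffineIsometry {R : Matrix (Fin 3) (Fin 3) ℝ} (hR : Rᵀ * R = 1)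
    (t : EuclideanSpace ℝ (Fin 3)) : ⇑(rotoTransAffineIsometry hR t) = rotoTrans R t := by
  funext x
  simp [rotoTransAffineIsometry, toEuclideanLinearIsometry, rotoTrans, toLpLin_apply, add_comm]

theorem AffineIsometry.norm_map_sub_map {𝕜 V V₂ : Type*} [NormedField 𝕜]
    [SeminormedAddCommGroup V] [NormedSpace 𝕜 V] [SeminormedAddCommGroup V₂] [NormedSpace 𝕜 V₂]
    (g : V →ᵃⁱ[𝕜] V₂) (x y : V) : ‖g x - g y‖ = ‖x - y‖ := by
  rw [← dist_eq_norm, ← dist_eq_norm, g.dist_map]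

theorem AffineMap.map_add_smul_sum_smul_sub {k V₁ V₂ ι : Type*} [Ring k] [AddCommGroup V₁]
    [Module k V₁] [AddCommGroup V₂] [Module k V₂] (f : V₁ →ᵃ[k] V₂) (x : V₁) (c : k)
    (s : Finset ι) (w : ι → k) (a b : ι → V₁) :
    f x + c • ∑ j ∈ s, w j • (f (a j) - f (b j)) = f (x + c • ∑ j ∈ s, w j • (a j - b j)) := by
  conv_rhs => rw [add_comm, ← vadd_eq_add, f.map_vadd, vadd_eq_add, add_comm]
  simp only [← vsub_eq_sub, ← f.linearMap_vsub, map_sum, map_smul]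

namespace VNEGNNLayer

variable {N K D E : ℕ} (P : VNEGNNLayer N K D E)
  (g : EuclideanSpace ℝ (Fin 3) →ᵃⁱ[ℝ] EuclideanSpace ℝ (Fin 3))
  (X : Fin N → EuclideanSpace ℝ (Fin 3)) (H : Fin N → Fin D → ℝ)
  (Z : Fin K → EuclideanSpace ℝ (Fin 3)) (V : Fin K → Fin D → ℝ)

theorem xHalf_equivariant :
    P.xHalf (fun i => g (X i)) H = fun i => g (P.xHalf X H i) := by
  funext i
  simp only [xHalf, g.norm_map_sub_map, smul_smul]
  exact g.toAffineMap.map_add_smul_sum_smul_sub ..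

theorem hHalf_invariant : P.hHalf (fun i => g (X i)) H = P.hHalf X H := by
  funext i
  simp only [hHalf, g.norm_map_sub_map]

theorem zOut_equivariant :
    P.zOut (fun i => g (X i)) H (fun k => g (Z k)) V = fun k => g (P.zOut X H Z V k) := by
  funext k
  simp only [zOut, xHalf_equivariant, hHalf_invariant, g.norm_map_sub_map, smul_smul]
  exact g.toAffineMap.map_add_smul_sum_smul_sub ..

theorem vOut_invariant :
    P.vOut (fun i => g (X i)) H (fun k => g (Z k)) V = P.vOut X H Z V := by
  funext k
  simp only [vOut, xHalf_equivariant, hHalf_invariant, g.norm_map_sub_map]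

theorem xOut_equivariant :
    P.xOut (fun i => g (X i)) H (fun k => g (Z k)) V = fun i => g (P.xOut X H Z V i) := by
  funext i
  simp only [xOut, xHalf_equivariant, hHalf_invariant, zOut_equivariant, vOut_invariant,
    g.norm_map_sub_map, smul_smul]
  exact g.toAffineMap.map_add_smul_sum_smul_sub ..

theorem hOut_invariant :
    P.hOut (fun i => g (X i)) H (fun k => g (Z k)) V = P.hOut X H Z V := by
  funext i
  simp only [hOut, xHalf_equivariant, hHalf_invariant, zOut_equivariant, vOut_invariant,
    g.norm_map_sub_map]

theorem layer_equivariant :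
    P.layer (fun i => g (X i)) H (fun k => g (Z k)) V =
      (fun i => g ((P.layer X H Z V).1 i), (P.layer X H Z V).2.1,
        fun k => g ((P.layer X H Z V).2.2.1 k), (P.layer X H Z V).2.2.2) := by
  simp only [layer, xOut_equivariant, hOut_invariant, zOut_equivariant, vOut_invariant]

end VNEGNNLayer

theorem vnegnn_layer_equivariant_general {N K D E : ℕ} (P : VNEGNNLayer N K D E)
    (X : Fin N → EuclideanSpace ℝ (Fin 3)) (H : Fin N → Fin D → ℝ)
    (Z : Fin K → EuclideanSpace ℝ (Fin 3)) (V : Fin K → Fin D → ℝ)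
    (R : Matrix (Fin 3) (Fin 3) ℝ) (hR : Rᵀ * R = 1) (t : EuclideanSpace ℝ (Fin 3)) :
    P.layer (fun i => rotoTrans R t (X i)) H (fun k => rotoTrans R t (Z k)) V =
      (fun i => rotoTrans R t ((P.layer X H Z V).1 i),
        (P.layer X H Z V).2.1,
        fun k => rotoTrans R t ((P.layer X H Z V).2.2.1 k),
        (P.layer X H Z V).2.2.2) := by
  rw [← coe_rotoTransAffineIsometry hR t]
  exact P.layer_equivariant _ X H Z V

/-- **Proposition 1.** A VN-EGNN layer is E(3)-equivariant: under the non-degeneracy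
assumptions that all pairwise distances appearing in the update formulas are nonzero,
jointly roto-translating (with possible reflection) the input physical and virtual node
coordinates by an orthogonal matrix `R` and a translation `t` roto-translates the output
coordinates by the same `R` and `t` and leaves the output features invariant. -/
theorem vnegnn_layer_equivariant {N K D E : ℕ} (P : VNEGNNLayer N K D E)
    (X : Fin N → EuclideanSpace ℝ (Fin 3)) (H : Fin N → Fin D → ℝ)
    (Z : Fin K → EuclideanSpace ℝ (Fin 3)) (V : Fin K → Fin D → ℝ)
    (hnd1 : ∀ i, ∀ j ∈ P.Nbr i, X i ≠ X j)
    (hnd2 : ∀ i j, P.xHalf X H i ≠ Z j)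
    (hnd3 : ∀ i j, P.zOut X H Z V i ≠ P.xHalf X H j)
    (R : Matrix (Fin 3) (Fin 3) ℝ) (hR : Rᵀ * R = 1) (t : EuclideanSpace ℝ (Fin 3)) :
    P.layer (fun i => rotoTrans R t (X i)) H (fun k => rotoTrans R t (Z k)) V =
      (fun i => rotoTrans R t ((P.layer X H Z V).1 i),
        (P.layer X H Z V).2.1,
        fun k => rotoTrans R t ((P.layer X H Z V).2.2.1 k),
        (P.layer X H Z V).2.2.2) :=
  vnegnn_layer_equivariant_general P X H Z V R hR t
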